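/- In the setting of the previous statement, for $\delta>0$ define the $\delta$-adjusted relative error $\varepsilon(\widetilde{H},z)=\|\widetilde{H}(z)-H(z)\|_F/(\|H(z)\|_F+\delta)$ and $\Delta(z)=\|C(zE-A)^{-1}\widetilde{B}\|_F/(\|C(zE-A)^{-1}B\|_F+\delta)$ with $\widetilde{B}=E\sum_j q_j(z_jE-A)^{-1}B$. Then $\varepsilon(\widetilde{H},z)=\Delta(z)\,|Q(z)|^{-1}$ for every $z$ with $zE-A$ invertible, $z\notin\{z_1,\dots,z_S\}$, and $Q(z)\neq 0$. -/

import Mathlib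

/-!
The resolvent identity of the pencil, `(z E - A)⁻¹ - (w E - A)⁻¹ = (w - z) (w E - A)⁻¹ E (z E - A)⁻¹`,
cancels the barycentric weight `q_j / (w - z_j)` in `H(z_j) - H(w)`. As the weights sum to `Q(w)`,
the surrogate error is `Q(w)⁻¹ C (w E - A)⁻¹ B̃`, and the Frobenius norm is absolutely homogeneous.
-/

/-- The Frobenius norm of a complex matrix. -/
noncomputable def frob {a b : ℕ} (M : Matrix (Fin a) (Fin b) ℂ) : ℝ :=
  Real.sqrt (∑ i, ∑ j, ‖M i j‖ ^ 2)

open Matrix in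
theorem frob_eq_frobenius_norm {a b : ℕ} (M : Matrix (Fin a) (Fin b) ℂ) :
    frob M = @norm _ frobeniusNormedAddCommGroup.toNorm M := by
  rw [frob, frobenius_norm_def, Real.sqrt_eq_rpow]
  simp only [Real.rpow_two]

theorem frob_smul {a b : ℕ} (c : ℂ) (M : Matrix (Fin a) (Fin b) ℂ) :
    frob (c • M) = ‖c‖ * frob M := by
  let := Matrix.frobeniusNormedAddCommGroup (m := Fin a) (n := Fin b) (α := ℂ)
  let := Matrix.frobeniusNormedSpace (R := ℂ) (m := Fin a) (n := Fin b) (α := ℂ)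
  simp only [frob_eq_frobenius_norm, norm_smul]

theorem inv_smul_sum_smul_sub {K V ι : Type*} [Field K] [AddCommGroup V] [Module K V]
    {s : Finset ι} {c : ι → K} {Q : K} (hQ : ∑ i ∈ s, c i = Q) (hQ₀ : Q ≠ 0)
    (f : ι → V) (g : V) :
    Q⁻¹ • ∑ i ∈ s, c i • f i - g = Q⁻¹ • ∑ i ∈ s, c i • (f i - g) := by
  simp only [smul_sub, Finset.sum_sub_distrib, ← Finset.sum_smul, hQ, smul_smul,
    inv_mul_cancel₀ hQ₀, one_smul]

theorem Matrix.inv_pencil_sub_inv_pencil {R n : Type*} [CommRing R] [Fintype n] [DecidableEq n]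
    {E A : Matrix n n R} {w z : R} (hw : IsUnit (w • E - A)) (hz : IsUnit (z • E - A)) :
    (z • E - A)⁻¹ - (w • E - A)⁻¹ = (w - z) • ((w • E - A)⁻¹ * E * (z • E - A)⁻¹) := by
  have hpencil : z • E - A - (w • E - A) = -((w - z) • E) := by rw [sub_smul]; abel
  rw [← neg_sub, nonsing_inv_eq_ringInverse, nonsing_inv_eq_ringInverse,
    Ring.inverse_sub_inverse (iff_of_true hw hz), hpencil, Matrix.mul_neg, Matrix.neg_mul, neg_neg,
    Matrix.mul_smul, Matrix.smul_mul]

theorem relative_error_eq_Delta_mul_inv_absQ_general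
    {n m p S : ℕ}
    (C : Matrix (Fin p) (Fin n) ℂ)
    (E A : Matrix (Fin n) (Fin n) ℂ) (B : Matrix (Fin n) (Fin m) ℂ)
    (δ : ℝ)
    (z : Fin S → ℂ)
    (hinv : ∀ j, IsUnit (z j • E - A))
    (q : Fin S → ℂ)
    (H : ℂ → Matrix (Fin p) (Fin m) ℂ)
    (hH : ∀ w, H w = C * ((w • E - A)⁻¹ * B))
    (Q : ℂ → ℂ) (hQ : ∀ w, Q w = ∑ j, q j / (w - z j))
    (Ht : ℂ → Matrix (Fin p) (Fin m) ℂ)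
    (hHt : ∀ w, Ht w = (Q w)⁻¹ • ∑ j, (q j / (w - z j)) • H (z j))
    (Bt : Matrix (Fin n) (Fin m) ℂ)
    (hBt : Bt = E * ∑ j, q j • ((z j • E - A)⁻¹ * B))
    (ε : ℂ → ℝ) (hε : ∀ w, ε w = frob (Ht w - H w) / (frob (H w) + δ))
    (Δ : ℂ → ℝ)
    (hΔ : ∀ w, Δ w = frob (C * ((w • E - A)⁻¹ * Bt)) /
      (frob (C * ((w • E - A)⁻¹ * B)) + δ)) :
    ∀ w : ℂ, IsUnit (w • E - A) → w ∉ Set.range z → Q w ≠ 0 →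
      ε w = Δ w * ‖Q w‖⁻¹ := by
  intro w hw hwz hQw
  have hweight : ∀ j, (q j / (w - z j)) • (H (z j) - H w) =
      q j • (C * ((w • E - A)⁻¹ * (E * ((z j • E - A)⁻¹ * B)))) := fun j => by
    have hwj : w - z j ≠ 0 := sub_ne_zero.mpr fun h => hwz ⟨j, h.symm⟩
    rw [hH, hH, ← Matrix.mul_sub, ← Matrix.sub_mul, Matrix.inv_pencil_sub_inv_pencil hw (hinv j)]
    simp only [Matrix.smul_mul, Matrix.mul_smul, smul_smul, div_mul_cancel₀ _ hwj,
      Matrix.mul_assoc]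
  have herror : Ht w - H w = (Q w)⁻¹ • (C * ((w • E - A)⁻¹ * Bt)) := by
    rw [hHt, inv_smul_sum_smul_sub (hQ w).symm hQw, Finset.sum_congr rfl fun j _ => hweight j, hBt]
    simp only [Matrix.mul_sum, Matrix.mul_smul]
  rw [hε, herror, frob_smul, hΔ, hH, norm_inv]
  ring

/-- The δ-adjusted relative error of the barycentric surrogate equals
`Δ(z) * |Q(z)|⁻¹`. -/
theorem relative_error_eq_Delta_mul_inv_absQ
    {n m p S : ℕ}
    (C : Matrix (Fin p) (Fin n) ℂ)
    (E A : Matrix (Fin n) (Fin n) ℂ) (B : Matrix (Fin n) (Fin m) ℂ)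
    (δ : ℝ) (hδ : 0 < δ)
    (z : Fin S → ℂ) (hz : Function.Injective z)
    (hinv : ∀ j, IsUnit (z j • E - A))
    (q : Fin S → ℂ)
    (H : ℂ → Matrix (Fin p) (Fin m) ℂ)
    (hH : ∀ w, H w = C * ((w • E - A)⁻¹ * B))
    (Q : ℂ → ℂ) (hQ : ∀ w, Q w = ∑ j, q j / (w - z j))
    (Ht : ℂ → Matrix (Fin p) (Fin m) ℂ)
    (hHt : ∀ w, Ht w = (Q w)⁻¹ • ∑ j, (q j / (w - z j)) • H (z j))
    (Bt : Matrix (Fin n) (Fin m) ℂ)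
    (hBt : Bt = E * ∑ j, q j • ((z j • E - A)⁻¹ * B))
    (ε : ℂ → ℝ) (hε : ∀ w, ε w = frob (Ht w - H w) / (frob (H w) + δ))
    (Δ : ℂ → ℝ)
    (hΔ : ∀ w, Δ w = frob (C * ((w • E - A)⁻¹ * Bt)) /
      (frob (C * ((w • E - A)⁻¹ * B)) + δ)) :
    ∀ w : ℂ, IsUnit (w • E - A) → w ∉ Set.range z → Q w ≠ 0 →
      ε w = Δ w * ‖Q w‖⁻¹ :=
  relative_error_eq_Delta_mul_inv_absQ_general C E A B δ z hinv q H hH Q hQ Ht hHt Bt hBt ε hε Δ hΔ
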